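/- arXiv:2305.00882 — 8 statements merged into one kernel-verified Lean document; each statement's English description precedes it below -/
import Mathlib

section
/- Let κ be an infinite cardinal, c : [κ]² → ω a coloring, k ∈ ω, and let A ⊆ ω₁ and B ⊆ ω₂∖ω₁ be sets of size ℵ₁ in ω₂ such that: (1) for any α₀, α₁ ∈ A there are uncountably many β ∈ B with c({α₀,β}) = k = c({α₁,β}), and (2) for any β₀ ∈ B there are uncountably many α ∈ A with c({α,β₀}) = k. Then the graph (A ∪ B, c⁻¹(k) ∩ [A ∪ B]²) is highly connected, i.e., removing any set of fewer than ℵ₁ vertices leaves a connected graph. -/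
open Cardinal

/-- If `A ⊆ ω₁` and `B ⊆ ω₂ \ ω₁` have size `ℵ₁` and satisfy the two
frequency conditions in color `k`, then `(A ∪ B, c⁻¹(k) ∩ [A ∪ B]²)` is highly connected:
removing any set of fewer than `ℵ₁` (i.e. countably many) vertices leaves it connected. -/
theorem stmt0 (c : Ordinal → Ordinal → ℕ) (csym : ∀ a b, c a b = c b a) (k : ℕ)
    (A B : Set Ordinal)
    (hA : A ⊆ Set.Iio (Cardinal.aleph 1).ord)
    (hB : B ⊆ Set.Ico (Cardinal.aleph 1).ord (Cardinal.aleph 2).ord)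
    (hAcard : Cardinal.mk A = Cardinal.aleph 1)
    (hBcard : Cardinal.mk B = Cardinal.aleph 1)
    (h1 : ∀ a₀ ∈ A, ∀ a₁ ∈ A, ¬ {b ∈ B | c a₀ b = k ∧ c a₁ b = k}.Countable)
    (h2 : ∀ b₀ ∈ B, ¬ {a ∈ A | c a b₀ = k}.Countable) :
    ∀ C : Set Ordinal, C.Countable →
      ∀ x ∈ (A ∪ B) \ C, ∀ y ∈ (A ∪ B) \ C,
        Relation.ReflTransGen
          (fun u v => u ∈ (A ∪ B) \ C ∧ v ∈ (A ∪ B) \ C ∧ u ≠ v ∧ c u v = k) x y := by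
  intro C hC x hx y hy
  set R := fun u v => u ∈ (A ∪ B) \ C ∧ v ∈ (A ∪ B) \ C ∧ u ≠ v ∧ c u v = k with hR
  have hdisj : ∀ a ∈ A, ∀ b ∈ B, a ≠ b := by
    intro a ha b hb
    exact ne_of_lt (lt_of_lt_of_le (hA ha) (hB hb).1)
  have key : ∀ S : Set Ordinal, ¬ S.Countable → ∃ s ∈ S, s ∉ C := by
    intro S hS
    by_contra h
    push_neg at h
    exact hS (hC.mono h)
  have connA : ∀ a₀ ∈ A, a₀ ∉ C → ∀ a₁ ∈ A, a₁ ∉ C → Relation.ReflTransGen R a₀ a₁ := by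
    intro a₀ ha₀ ha₀C a₁ ha₁ ha₁C
    obtain ⟨b, ⟨hbB, hb0, hb1⟩, hbC⟩ := key _ (h1 a₀ ha₀ a₁ ha₁)
    have e1 : R a₀ b := ⟨⟨Or.inl ha₀, ha₀C⟩, ⟨Or.inr hbB, hbC⟩, hdisj _ ha₀ _ hbB, hb0⟩
    have e2 : R b a₁ := ⟨⟨Or.inr hbB, hbC⟩, ⟨Or.inl ha₁, ha₁C⟩,
      (hdisj _ ha₁ _ hbB).symm, by rw [csym]; exact hb1⟩
    exact Relation.ReflTransGen.head e1 (Relation.ReflTransGen.single e2)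
  have toA : ∀ z, z ∈ (A ∪ B) \ C → ∃ a, a ∈ A ∧ a ∉ C ∧
      Relation.ReflTransGen R z a ∧ Relation.ReflTransGen R a z := by
    rintro z ⟨hzAB, hzC⟩
    cases hzAB with
    | inl h => exact ⟨z, h, hzC, Relation.ReflTransGen.refl, Relation.ReflTransGen.refl⟩
    | inr h =>
      obtain ⟨a, ⟨haA, hak⟩, haC⟩ := key _ (h2 z h)
      have e1 : R z a := ⟨⟨Or.inr h, hzC⟩, ⟨Or.inl haA, haC⟩,
        (hdisj a haA z h).symm, by rw [csym]; exact hak⟩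
      have e2 : R a z := ⟨⟨Or.inl haA, haC⟩, ⟨Or.inr h, hzC⟩, hdisj a haA z h, hak⟩
      exact ⟨a, haA, haC, Relation.ReflTransGen.single e1, Relation.ReflTransGen.single e2⟩
  obtain ⟨ax, haxA, haxC, px, _⟩ := toA x hx
  obtain ⟨ay, hayA, hayC, _, qy⟩ := toA y hy
  exact (px.trans (connA ax haxA haxC ay hayA hayC)).trans qy
end

section
/- Let I be an ideal on κ and D ⊆ P(κ)/I a dense subset. If Player Empty has a winning strategy in the game G_I, then Player Empty has a winning strategy σ in G_I whose range is contained in {A ∖ M : A ∈ D, M ∈ I}. -/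
/-- An ideal of subsets of `α`. -/
def IsIdeal {α : Type*} (I : Set (Set α)) : Prop :=
  ∅ ∈ I ∧ (∀ ⦃A B : Set α⦄, A ∈ I → B ⊆ A → B ∈ I) ∧
    (∀ ⦃A B : Set α⦄, A ∈ I → B ∈ I → A ∪ B ∈ I)

/-- A strategy for Player Empty in the game `G_I`: given the finite sequence of pairs
played so far by Player Nonempty, it produces Empty's next pair. -/
abbrev Strat (α : Type*) := List (Set α × Set α) → Set α × Set α

/-- The sequence `e` of Empty's moves follows the strategy `σ` against Nonempty's moves `m`. -/
def Follows {α : Type*} (σ : Strat α) (e m : ℕ → Set α × Set α) : Prop :=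
  ∀ n, e n = σ ((List.range n).map m)

/-- Nonempty's `n`-th move is legal: both coordinates are `I`-positive subsets of
Empty's `n`-th move. -/
def NonLegalAt {α : Type*} (I : Set (Set α)) (e m : ℕ → Set α × Set α) (n : ℕ) : Prop :=
  (m n).1 ∉ I ∧ (m n).2 ∉ I ∧ (m n).1 ⊆ (e n).1 ∧ (m n).2 ⊆ (e n).2

/-- Empty's `n`-th move is legal: both coordinates are `I`-positive, and (for `n > 0`)
subsets of Nonempty's previous move. -/
def EmptyLegalAt {α : Type*} (I : Set (Set α)) (e m : ℕ → Set α × Set α) (n : ℕ) : Prop :=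
  (e n).1 ∉ I ∧ (e n).2 ∉ I ∧
    (n = 0 ∨ ((e n).1 ⊆ (m (n - 1)).1 ∧ (e n).2 ⊆ (m (n - 1)).2))

/-- Player Nonempty wins a run of `G_I` with moves `m`: there are `a < b` with `a` in the
intersection of all first coordinates and `b` in the intersection of all second coordinates. -/
def NonemptyWins {α : Type*} [LinearOrder α] (m : ℕ → Set α × Set α) : Prop :=
  ∃ a b : α, a < b ∧ (∀ n, a ∈ (m n).1) ∧ (∀ n, b ∈ (m n).2)

/-- `σ` is a winning strategy for Player Empty in `G_I`: it always responds legally to legal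
partial plays, and in every full legal run following `σ`, Nonempty does not win. -/
def EmptyWinning {α : Type*} [LinearOrder α] (I : Set (Set α)) (σ : Strat α) : Prop :=
  (∀ e m n, Follows σ e m → (∀ k < n, NonLegalAt I e m k) → EmptyLegalAt I e m n) ∧
  (∀ e m, Follows σ e m → (∀ n, NonLegalAt I e m n) → ¬ NonemptyWins m)

open Classical in
/-- Refine an `I`-positive set `S` to one of the form `A \ M` with `A ∈ D`, `M ∈ I`,
which is still `I`-positive and contained in `S`. -/
noncomputable def ref {α : Type*} (I D : Set (Set α))
    (hD : ∀ A : Set α, A ∉ I → ∃ B ∈ D, B ∉ I ∧ B \ A ∈ I) (B₀ : Set α) (S : Set α) :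
    Set α :=
  if h : S ∉ I then (hD S h).choose ∩ S else B₀

lemma ref_form {α : Type*} {I D : Set (Set α)} (hI : IsIdeal I)
    (hD : ∀ A : Set α, A ∉ I → ∃ B ∈ D, B ∉ I ∧ B \ A ∈ I) {B₀ : Set α} (hB₀ : B₀ ∈ D)
    (S : Set α) : ∃ A ∈ D, ∃ M ∈ I, ref I D hD B₀ S = A \ M := by
  by_cases h : S ∉ I
  · obtain ⟨hAD, hAI, hM⟩ := (hD S h).choose_spec
    refine ⟨_, hAD, (hD S h).choose \ S, hM, ?_⟩
    unfold ref; rw [dif_pos h]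
    ext x; simp only [Set.mem_inter_iff, Set.mem_diff]; tauto
  · exact ⟨B₀, hB₀, ∅, hI.1, by unfold ref; rw [dif_neg h, Set.diff_empty]⟩

lemma ref_pos {α : Type*} {I D : Set (Set α)} (hI : IsIdeal I)
    (hD : ∀ A : Set α, A ∉ I → ∃ B ∈ D, B ∉ I ∧ B \ A ∈ I) (B₀ : Set α)
    {S : Set α} (h : S ∉ I) : ref I D hD B₀ S ∉ I ∧ ref I D hD B₀ S ⊆ S := by
  obtain ⟨hAD, hAI, hM⟩ := (hD S h).choose_spec
  unfold ref; rw [dif_pos h]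
  refine ⟨fun hmem => hAI ?_, Set.inter_subset_right⟩
  have hsub : (hD S h).choose ⊆ ((hD S h).choose ∩ S) ∪ ((hD S h).choose \ S) := by
    intro x hx; by_cases hxS : x ∈ S <;> simp [hx, hxS]
  exact hI.2.1 (hI.2.2 hmem hM) hsub

/-- if `D` is dense in `P(κ)/I` and Player Empty has a winning strategy in
`G_I`, then Empty has a winning strategy all of whose outputs are of the form
`(A ∖ M, A' ∖ M')` with `A, A' ∈ D` and `M, M' ∈ I`. -/
theorem stmt2 {α : Type*} [LinearOrder α] (I : Set (Set α)) (hI : IsIdeal I)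
    (D : Set (Set α))
    (hD : ∀ A : Set α, A ∉ I → ∃ B ∈ D, B ∉ I ∧ B \ A ∈ I)
    (hwin : ∃ σ : Strat α, EmptyWinning I σ) :
    ∃ σ' : Strat α, EmptyWinning I σ' ∧
      ∀ l : List (Set α × Set α),
        (∃ A ∈ D, ∃ M ∈ I, (σ' l).1 = A \ M) ∧
        (∃ A ∈ D, ∃ M ∈ I, (σ' l).2 = A \ M) := by
  classical
  obtain ⟨σ, hσ⟩ := hwin
  -- get some B₀ ∈ D
  have hS0 : (σ ([] : List (Set α × Set α))).1 ∉ I := by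
    have h := hσ.1 (fun n => σ ((List.range n).map (fun _ => (∅, ∅))))
      (fun _ => (∅, ∅)) 0 (fun n => rfl) (by omega)
    simpa using h.1
  obtain ⟨B₀, hB₀D, hB₀I, -⟩ := hD _ hS0
  set R := ref I D hD B₀ with hR
  refine ⟨fun l => (R (σ l).1, R (σ l).2), ?_, fun l =>
    ⟨ref_form hI hD hB₀D (σ l).1, ref_form hI hD hB₀D (σ l).2⟩⟩
  have key : ∀ (e' m : ℕ → Set α × Set α),
      Follows (fun l => (R (σ l).1, R (σ l).2)) e' m →
      ∀ n, (∀ k < n, NonLegalAt I e' m k) →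
        ∀ k < n, NonLegalAt I (fun j => σ ((List.range j).map m)) m k := by
    intro e' m hF n
    induction n with
    | zero => intro _ k hk; omega
    | succ n ih =>
      intro hleg k hk
      rcases Nat.lt_or_ge k n with h | h
      · exact ih (fun j hj => hleg j (by omega)) k h
      · have hkn : k = n := by omega
        subst hkn
        have hEk : EmptyLegalAt I (fun j => σ ((List.range j).map m)) m k :=
          hσ.1 _ m k (fun _ => rfl) (ih (fun j hj => hleg j (by omega)))
        have hl := hleg k (by omega)
        have he' : e' k = (R (σ ((List.range k).map m)).1, R (σ ((List.range k).map m)).2) :=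
          hF k
        refine ⟨hl.1, hl.2.1, ?_, ?_⟩
        · exact (he' ▸ hl.2.2.1).trans (ref_pos hI hD B₀ hEk.1).2
        · exact (he' ▸ hl.2.2.2).trans (ref_pos hI hD B₀ hEk.2.1).2
  constructor
  · intro e' m n hF hleg
    have hlegE := key e' m hF n hleg
    have hEn : EmptyLegalAt I (fun j => σ ((List.range j).map m)) m n :=
      hσ.1 _ m n (fun _ => rfl) hlegE
    have he' : e' n = (R (σ ((List.range n).map m)).1, R (σ ((List.range n).map m)).2) := hF n
    unfold EmptyLegalAt
    rw [he']
    refine ⟨(ref_pos hI hD B₀ hEn.1).1, (ref_pos hI hD B₀ hEn.2.1).1, ?_⟩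
    rcases Nat.eq_zero_or_pos n with h0 | hpos
    · exact Or.inl h0
    · have h := hEn.2.2.resolve_left (by omega)
      exact Or.inr ⟨(ref_pos hI hD B₀ hEn.1).2.trans h.1,
        (ref_pos hI hD B₀ hEn.2.1).2.trans h.2⟩
  · intro e' m hF hleg
    exact hσ.2 _ m (fun _ => rfl)
      (fun n => key e' m hF (n + 1) (fun k _ => hleg k) n (Nat.lt_succ_self n))
end

section
/- Let I be a normal ideal on a regular uncountable cardinal κ, c : [κ]² → ω, and suppose (B₀, B₁) is an (i,j)-frequent pair of I-positive sets. Then for any I-positive B₁' ⊆ B₁, the set {α ∈ B₀ : {β ∈ B₁' : c(α,β) = i} ∈ I⁺} belongs to the filter dual to I restricted to B₀ (i.e., its complement within B₀ is in I). -/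
/-- `I` is countably complete (σ-complete): closed under countable unions. -/
def CountablyComplete {α : Type*} (I : Set (Set α)) : Prop :=
  ∀ f : ℕ → Set α, (∀ n, f n ∈ I) → (⋃ n, f n) ∈ I

/-- `I` is uniform: every set of size `< |α|` is in `I`. -/
def UniformIdeal {α : Type*} (I : Set (Set α)) : Prop :=
  ∀ A : Set α, Cardinal.mk A < Cardinal.mk α → A ∈ I

/-- `I` is normal: closed under diagonal unions. -/
def NormalIdeal {α : Type*} [LinearOrder α] (I : Set (Set α)) : Prop :=
  ∀ A : α → Set α, (∀ γ, A γ ∈ I) → {b : α | ∃ γ < b, b ∈ A γ} ∈ I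

/-- The pair `(B₀, B₁)` of `I`-positive sets is `(i,j)`-frequent for the coloring `c`:
for all `I`-positive `B₀' ⊆ B₀` and `B₁' ⊆ B₁` there are `α < β` with `α ∈ B₀'`,
`β ∈ B₁'`, `c α β = i`, and `β' < α'` with `β' ∈ B₁'`, `α' ∈ B₀'`, `c β' α' = j`. -/
def Freq2 {α : Type*} [LinearOrder α] (I : Set (Set α)) (c : α → α → ℕ)
    (B₀ B₁ : Set α) (i j : ℕ) : Prop :=
  ∀ B₀' ⊆ B₀, B₀' ∉ I → ∀ B₁' ⊆ B₁, B₁' ∉ I →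
    (∃ a ∈ B₀', ∃ b ∈ B₁', a < b ∧ c a b = i) ∧
    (∃ b ∈ B₁', ∃ a ∈ B₀', b < a ∧ c b a = j)

/-- if `I` is a normal ideal on a regular uncountable cardinal `κ` and
`(B₀, B₁)` is an `(i,j)`-frequent pair of `I`-positive sets, then for any `I`-positive
`B₁' ⊆ B₁`, the set `{α ∈ B₀ : {β ∈ B₁' : c α β = i} ∈ I⁺}` is in the dual filter of `I`
restricted to `B₀`: its complement within `B₀` is in `I`. -/
theorem stmt4 {α : Type*} [LinearOrder α] [WellFoundedLT α]
    (hreg : (Cardinal.mk α).IsRegular) (hunc : Cardinal.aleph0 < Cardinal.mk α)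
    (I : Set (Set α)) (hI : IsIdeal I) (hn : NormalIdeal I)
    (c : α → α → ℕ) (csym : ∀ a b, c a b = c b a)
    (B₀ B₁ : Set α) (hB₀ : B₀ ∉ I) (hB₁ : B₁ ∉ I) (i j : ℕ)
    (hfreq : Freq2 I c B₀ B₁ i j) :
    ∀ B₁' ⊆ B₁, B₁' ∉ I →
      B₀ \ {a ∈ B₀ | {b ∈ B₁' | c a b = i} ∉ I} ∈ I := by
  intro B₁' hsub hpos
  set X := B₀ \ {a ∈ B₀ | {b ∈ B₁' | c a b = i} ∉ I} with hX
  by_contra hXpos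
  -- every a ∈ X has small fiber
  have hfib : ∀ a ∈ X, {b ∈ B₁' | c a b = i} ∈ I := by
    intro a ha
    rcases ha with ⟨haB, hnot⟩
    by_contra h
    exact hnot ⟨haB, h⟩
  classical
  set A : α → Set α := fun a => if a ∈ X then {b ∈ B₁' | c a b = i} else ∅ with hA
  have hAI : ∀ γ, A γ ∈ I := by
    intro γ
    by_cases h : γ ∈ X
    · simpa [hA, h] using hfib γ h
    · simpa [hA, h] using hI.1
  have hD : {b : α | ∃ γ < b, b ∈ A γ} ∈ I := hn A hAI
  set D := {b : α | ∃ γ < b, b ∈ A γ} with hDdef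
  set B₁'' := B₁' \ D with hB''
  have hB''sub : B₁'' ⊆ B₁ := fun b hb => hsub hb.1
  have hB''pos : B₁'' ∉ I := by
    intro h
    apply hpos
    have : B₁' ⊆ B₁'' ∪ D := by
      intro b hb
      by_cases hbD : b ∈ D
      · exact Or.inr hbD
      · exact Or.inl ⟨hb, hbD⟩
    exact hI.2.1 (hI.2.2 h hD) this
  have hXsub : X ⊆ B₀ := Set.diff_subset
  obtain ⟨⟨a, haX, b, hbB, hab, hcab⟩, -⟩ := hfreq X hXsub hXpos B₁'' hB''sub hB''pos
  exact hbB.2 ⟨a, hab, by simp [hA, haX, hbB.1, hcab]⟩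
end

section
/- Let κ be regular uncountable, c : [κ]² → ω, I a normal uniform ideal on κ, and let B₀*, B₁* be I-positive sets with i, j ∈ ω such that: (1) (B₀*, B₁*) is (i,j)-frequent; (2) for every α ∈ B₀*, the set {β ∈ B₁* : c(α,β) = i} is I-positive; and (3) for every β' ∈ B₁*, the set {α' ∈ B₀* : c(β',α') = j} is I-positive. Then the graph (B₀* ∪ B₁*, c⁻¹({i,j}) ∩ [B₀* ∪ B₁*]²) is highly connected. -/
/-- Any two points of `X` are connected by an `E`-path inside `X`. -/
def ConnectedIn {α : Type*} (E : α → α → Prop) (X : Set α) : Prop :=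
  ∀ a ∈ X, ∀ b ∈ X, Relation.ReflTransGen (fun u v => u ∈ X ∧ v ∈ X ∧ E u v) a b

/-- The graph `(X, E)` is highly connected: removing any set of fewer than `|X|`
vertices leaves it connected. -/
def HighlyConnected {α : Type*} (E : α → α → Prop) (X : Set α) : Prop :=
  ∀ Y : Set α, Cardinal.mk Y < Cardinal.mk X → ConnectedIn E (X \ Y)

/-! Removing a set `Y` of fewer than `|B₀* ∪ B₁*|` vertices only removes an `I`-small set, by
uniformity. For `a ∈ B₀* \ Y` and `b ∈ B₁* \ Y`, the `i`-neighbours of `a` in `B₁*` and the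
`j`-neighbours of `b` in `B₀*` stay `I`-positive after deleting `Y`, `a` and `b`, so frequency
yields an `i`-edge `u < v` between them and hence the path `a — v — u — b` avoiding `Y`.
Every vertex of `B₀* \ Y` is thus joined to every vertex of `B₁* \ Y`, and both sides are
nonempty. -/

open Cardinal Relation

section

variable {α : Type*}

namespace IsIdeal

variable {I : Set (Set α)}

theorem union_mem (hI : IsIdeal I) {A B : Set α} (hA : A ∈ I) (hB : B ∈ I) : A ∪ B ∈ I :=
  hI.2.2 hA hB

theorem diff_notMem (hI : IsIdeal I) {B S : Set α} (hB : B ∉ I) (hS : S ∈ I) : B \ S ∉ I :=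
  fun h => hB (hI.2.1 (hI.union_mem h hS) (Set.subset_sdiff_union B S))

theorem nonempty_of_notMem (hI : IsIdeal I) {B : Set α} (hB : B ∉ I) : B.Nonempty :=
  Set.nonempty_iff_ne_empty.2 fun h => hB (h ▸ hI.1)

end IsIdeal

namespace UniformIdeal

variable {I : Set (Set α)}

theorem mem_of_mk_lt (hu : UniformIdeal I) {X Y : Set α} (hY : #Y < #X) : Y ∈ I :=
  hu Y (hY.trans_le (mk_set_le X))

theorem singleton_mem (hu : UniformIdeal I) (h : 1 < #α) (x : α) : ({x} : Set α) ∈ I :=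
  hu {x} (by rwa [mk_singleton])

end UniformIdeal

theorem connectedIn_union {E : α → α → Prop} (hE : ∀ x y, E x y → E y x) {A B : Set α}
    (hA : A.Nonempty) (hB : B.Nonempty)
    (h : ∀ a ∈ A, ∀ b ∈ B, ReflTransGen (fun u v => u ∈ A ∪ B ∧ v ∈ A ∪ B ∧ E u v) a b) :
    ConnectedIn E (A ∪ B) := by
  have : Std.Symm (fun u v => u ∈ A ∪ B ∧ v ∈ A ∪ B ∧ E u v) :=
    ⟨fun u v ⟨hu, hv, huv⟩ => ⟨hv, hu, hE u v huv⟩⟩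
  rintro x (hx | hx) y (hy | hy)
  · obtain ⟨b, hb⟩ := hB
    exact (h x hx b hb).trans (symm (h y hy b hb))
  · exact h x hx y hy
  · exact symm (h y hy x hx)
  · obtain ⟨a, ha⟩ := hA
    exact (symm (h a ha x hx)).trans (h a ha y hy)

theorem Freq2.reflTransGen_diff [LinearOrder α] {I : Set (Set α)} (hI : IsIdeal I)
    (hsing : ∀ x : α, ({x} : Set α) ∈ I) {c : α → α → ℕ} (csym : ∀ a b, c a b = c b a)
    {B₀ B₁ : Set α} {i j : ℕ} (hfreq : Freq2 I c B₀ B₁ i j)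
    (h2 : ∀ a ∈ B₀, {b ∈ B₁ | c a b = i} ∉ I) (h3 : ∀ b ∈ B₁, {a ∈ B₀ | c b a = j} ∉ I)
    {Y : Set α} (hY : Y ∈ I) {a b : α} (ha : a ∈ B₀ \ Y) (hb : b ∈ B₁ \ Y) :
    ReflTransGen (fun u v => u ∈ B₀ \ Y ∪ B₁ \ Y ∧ v ∈ B₀ \ Y ∪ B₁ \ Y ∧
      u ≠ v ∧ (c u v = i ∨ c u v = j)) a b := by
  obtain ⟨⟨u, hu, v, hv, huv, hc⟩, -⟩ :=
    hfreq ({x ∈ B₀ | c b x = j} \ (Y ∪ {b})) (fun x hx => hx.1.1)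
      (hI.diff_notMem (h3 b hb.1) (hI.union_mem hY (hsing b)))
      ({y ∈ B₁ | c a y = i} \ (Y ∪ {a})) (fun y hy => hy.1.1)
      (hI.diff_notMem (h2 a ha.1) (hI.union_mem hY (hsing a)))
  have huX : u ∈ B₀ \ Y := ⟨hu.1.1, fun h => hu.2 (Or.inl h)⟩
  have hvX : v ∈ B₁ \ Y := ⟨hv.1.1, fun h => hv.2 (Or.inl h)⟩
  have hav : a ≠ v := fun h => hv.2 (Or.inr h.symm)
  have hub : u ≠ b := fun h => hu.2 (Or.inr h)
  exact .head ⟨Or.inl ha, Or.inr hvX, hav, Or.inl hv.1.2⟩ <|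
    .head ⟨Or.inr hvX, Or.inl huX, huv.ne', Or.inl ((csym v u).trans hc)⟩ <|
    .single ⟨Or.inl huX, Or.inr hb, hub, Or.inr ((csym u b).trans hu.1.2)⟩

end

theorem stmt5_general {α : Type*} [LinearOrder α]
    (hunc : Cardinal.aleph0 < Cardinal.mk α)
    (I : Set (Set α)) (hI : IsIdeal I) (hu : UniformIdeal I)
    (c : α → α → ℕ) (csym : ∀ a b, c a b = c b a)
    (B₀ B₁ : Set α) (hB₀ : B₀ ∉ I) (hB₁ : B₁ ∉ I) (i j : ℕ)
    (hfreq : Freq2 I c B₀ B₁ i j)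
    (h2 : ∀ a ∈ B₀, {b ∈ B₁ | c a b = i} ∉ I)
    (h3 : ∀ b ∈ B₁, {a ∈ B₀ | c b a = j} ∉ I) :
    HighlyConnected (fun x y => x ≠ y ∧ (c x y = i ∨ c x y = j)) (B₀ ∪ B₁) := by
  intro Y hY
  have hYI : Y ∈ I := hu.mem_of_mk_lt hY
  have hsing := hu.singleton_mem (one_lt_aleph0.trans hunc)
  rw [Set.union_sdiff_distrib]
  exact connectedIn_union (fun x y ⟨hne, hc⟩ => ⟨hne.symm, by rwa [csym]⟩)
    (hI.nonempty_of_notMem (hI.diff_notMem hB₀ hYI))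
    (hI.nonempty_of_notMem (hI.diff_notMem hB₁ hYI))
    fun a ha b hb => hfreq.reflTransGen_diff hI hsing csym h2 h3 hYI ha hb

/-- if `(B₀*, B₁*)` is an `(i,j)`-frequent pair of `I`-positive sets such that
every `α ∈ B₀*` has `I`-positively many `i`-neighbors in `B₁*` and every `β' ∈ B₁*` has
`I`-positively many `j`-neighbors in `B₀*`, then `(B₀* ∪ B₁*, c⁻¹({i,j}))` is highly
connected. -/
theorem stmt5 {α : Type*} [LinearOrder α] [WellFoundedLT α]
    (hreg : (Cardinal.mk α).IsRegular) (hunc : Cardinal.aleph0 < Cardinal.mk α)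
    (I : Set (Set α)) (hI : IsIdeal I) (hn : NormalIdeal I) (hu : UniformIdeal I)
    (c : α → α → ℕ) (csym : ∀ a b, c a b = c b a)
    (B₀ B₁ : Set α) (hB₀ : B₀ ∉ I) (hB₁ : B₁ ∉ I) (i j : ℕ)
    (hfreq : Freq2 I c B₀ B₁ i j)
    (h2 : ∀ a ∈ B₀, {b ∈ B₁ | c a b = i} ∉ I)
    (h3 : ∀ b ∈ B₁, {a ∈ B₀ | c b a = j} ∉ I) :
    HighlyConnected (fun x y => x ≠ y ∧ (c x y = i ∨ c x y = j)) (B₀ ∪ B₁) :=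
  stmt5_general hunc I hI hu c csym B₀ B₁ hB₀ hB₁ i j hfreq h2 h3
end

section
/- Let κ be a regular cardinal, I a countably complete uniform ideal on κ, c : [κ]² → ω a coloring, and suppose there is a color i ∈ ω and I-positive sets ⟨B_n : n ∈ ω⟩ such that (B_n, B_k) is i-frequent for all n < k. For each n let B_n* = {α ∈ B_n : for all k > n, {β ∈ B_k : c(α,β) = i} ∈ I⁺}, and assume each B_n* is I-positive. Then B = ⋃_n B_n* is highly connected in color i via paths of length < 4: for every C ⊆ B with |C| < κ and every α ≠ β in B∖C, there is a c-monochromatic path of color i and length at most 3 from α to β within B∖C. -/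
/-- The pair `(B₀, B₁)` of `I`-positive sets is `i`-frequent for the coloring `c`:
for all `I`-positive `B₀' ⊆ B₀` and `B₁' ⊆ B₁`, the set of `α ∈ B₀'` with `I`-positively
many `β ∈ B₁'` such that `c α β = i` is `I`-positive. -/
def Freq1 {α : Type*} (I : Set (Set α)) (c : α → α → ℕ) (B₀ B₁ : Set α) (i : ℕ) : Prop :=
  ∀ B₀' ⊆ B₀, B₀' ∉ I → ∀ B₁' ⊆ B₁, B₁' ∉ I →
    {a ∈ B₀' | {b ∈ B₁' | c a b = i} ∉ I} ∉ I

/-- There is a path `γ 0 = a, γ 1, …, γ l = b` of length `l` inside `S` all of whose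
edges have `c`-color `i`. -/
def MonoPath {α : Type*} (c : α → α → ℕ) (i : ℕ) (S : Set α) (l : ℕ) (a b : α) : Prop :=
  ∃ γ : ℕ → α, γ 0 = a ∧ γ l = b ∧ (∀ j ≤ l, γ j ∈ S) ∧ ∀ j < l, c (γ j) (γ (j + 1)) = i

/-- given `I`-positive sets `⟨B n⟩` with `(B n, B k)` `i`-frequent for all
`n < k`, and `Bs n = {α ∈ B n : ∀ k > n, {β ∈ B k : c α β = i} ∈ I⁺}` all `I`-positive,
the union `⋃ n, Bs n` is highly connected in color `i` via paths of length at most 3: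
removing fewer than `κ` vertices, any two distinct remaining vertices are joined by an
`i`-colored path of length at most 3. -/
theorem stmt9 {α : Type*} [LinearOrder α] [WellFoundedLT α]
    (hreg : (Cardinal.mk α).IsRegular)
    (I : Set (Set α)) (hI : IsIdeal I) (hcc : CountablyComplete I) (hu : UniformIdeal I)
    (c : α → α → ℕ) (csym : ∀ a b, c a b = c b a) (i : ℕ)
    (B : ℕ → Set α) (hBpos : ∀ n, B n ∉ I)
    (hfreq : ∀ n k : ℕ, n < k → Freq1 I c (B n) (B k) i)
    (Bs : ℕ → Set α)
    (hBs : ∀ n, Bs n = {a ∈ B n | ∀ k, n < k → {b ∈ B k | c a b = i} ∉ I})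
    (hBspos : ∀ n, Bs n ∉ I) :
    ∀ C ⊆ (⋃ n, Bs n), Cardinal.mk C < Cardinal.mk α →
      ∀ a ∈ (⋃ n, Bs n) \ C, ∀ b ∈ (⋃ n, Bs n) \ C, a ≠ b →
        ∃ l ≤ 3, MonoPath c i ((⋃ n, Bs n) \ C) l a b := by
  intro C hCsub hCcard a ha b hb hab
  obtain ⟨hI0, hIdown, hIun⟩ := hI
  have hCI : C ∈ I := hu C hCcard
  have hdiff : ∀ X : Set α, X ∉ I → X \ C ∉ I := by
    intro X hX h
    refine hX (hIdown (hIun h hCI) ?_)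
    intro x hx
    by_cases hc : x ∈ C
    · exact Or.inr hc
    · exact Or.inl ⟨hx, hc⟩
  have hne : ∀ X : Set α, X ∉ I → X.Nonempty := by
    intro X hX
    rcases X.eq_empty_or_nonempty with h | h
    · exact absurd (h ▸ hI0) hX
    · exact h
  have key : ∀ k : ℕ, ∀ X : Set α, X ⊆ B k → X ∉ I → X ∩ Bs k ∉ I := by
    intro k X hXB hX hint
    have hY : X \ Bs k ∉ I := by
      intro h
      apply hX
      apply hIdown (hIun hint h)
      intro x hx
      by_cases hc : x ∈ Bs k
      · exact Or.inl ⟨hx, hc⟩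
      · exact Or.inr ⟨hx, hc⟩
    set f : ℕ → Set α := fun j => {x ∈ X \ Bs k | k < j ∧ {b ∈ B j | c x b = i} ∈ I}
      with hf
    have hcover : X \ Bs k ⊆ ⋃ j, f j := by
      intro x hx
      have hxB : x ∈ B k := hXB hx.1
      have hxn : x ∉ Bs k := hx.2
      rw [hBs k] at hxn
      simp only [Set.mem_setOf_eq, not_and, not_forall] at hxn
      obtain ⟨j, hj⟩ := hxn hxB
      push_neg at hj
      exact Set.mem_iUnion.2 ⟨j, hx, hj.1, hj.2⟩
    obtain ⟨j, hfj⟩ : ∃ j, f j ∉ I := by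
      by_contra h
      push_neg at h
      exact hY (hIdown (hcc f h) hcover)
    have hkj : k < j := by
      by_contra h
      apply hfj
      have : f j = ∅ := Set.eq_empty_iff_forall_notMem.mpr fun x hx => h hx.2.1
      rw [this]; exact hI0
    have hS := hfreq k j hkj (f j) (fun x hx => hXB hx.1.1) hfj (B j) subset_rfl (hBpos j)
    obtain ⟨x, hx1, hx2⟩ := hne _ hS
    exact hx2 hx1.2.2
  obtain ⟨haU, haC⟩ := ha
  obtain ⟨hbU, hbC⟩ := hb
  obtain ⟨n, han⟩ := Set.mem_iUnion.1 haU
  obtain ⟨m, hbm⟩ := Set.mem_iUnion.1 hbU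
  have han' := han; rw [hBs n] at han'
  obtain ⟨haB, haF⟩ := han'
  have hbm' := hbm; rw [hBs m] at hbm'
  obtain ⟨hbB, hbF⟩ := hbm'
  set k : ℕ := max n m + 1 with hk
  set k' : ℕ := k + 1 with hk'
  have hnk : n < k := Nat.lt_succ_of_le (le_max_left n m)
  have hmk' : m < k' := lt_trans (Nat.lt_succ_of_le (le_max_right n m)) (Nat.lt_succ_self k)
  have hXa : {y ∈ B k | c a y = i} ∉ I := haF k hnk
  have hXb : {y ∈ B k' | c b y = i} ∉ I := hbF k' hmk'
  have hXa' : ({y ∈ B k | c a y = i} ∩ Bs k) \ C ∉ I :=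
    hdiff _ (key k _ (fun x hx => hx.1) hXa)
  have hXb' : ({y ∈ B k' | c b y = i} ∩ Bs k') \ C ∉ I :=
    hdiff _ (key k' _ (fun x hx => hx.1) hXb)
  have hS := hfreq k k' (Nat.lt_succ_self k)
    _ (fun x hx => hx.1.1.1) hXa' _ (fun y hy => hy.1.1.1) hXb'
  obtain ⟨x, hxmem, hxpos⟩ := hne _ hS
  obtain ⟨y, hymem, hcxy⟩ := hne _ hxpos
  have hax : c a x = i := hxmem.1.1.2
  have hyb : c y b = i := (csym y b).trans hymem.1.1.2
  have ma : a ∈ (⋃ n, Bs n) \ C := ⟨haU, haC⟩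
  have mb : b ∈ (⋃ n, Bs n) \ C := ⟨hbU, hbC⟩
  have mx : x ∈ (⋃ n, Bs n) \ C := ⟨Set.mem_iUnion.2 ⟨k, hxmem.1.2⟩, hxmem.2⟩
  have my : y ∈ (⋃ n, Bs n) \ C := ⟨Set.mem_iUnion.2 ⟨k', hymem.1.2⟩, hymem.2⟩
  refine ⟨3, le_refl 3,
    fun j => if j = 0 then a else if j = 1 then x else if j = 2 then y else b,
    by simp, by simp, ?_, ?_⟩
  · intro j hj
    interval_cases j
    · simpa using ma
    · simpa using mx
    · simpa using my
    · simpa using mb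
  · intro j hj
    interval_cases j
    · simpa using hax
    · simpa using hcxy
    · simpa using hyb
end

section
/- Let I be a countably complete ideal on κ admitting a σ-closed dense collection of I-positive sets, and let c : [κ]² → ω. Then for every I-positive set B' there exist i ∈ ω and I-positive sets B₀, B₁ ⊆ B' such that (B₀, B₁) is i-frequent. -/
/-- `H` is a dense collection of `I`-positive sets: every member of `H` is `I`-positive
and every `I`-positive set contains a member of `H`. -/
def DensePos {α : Type*} (I : Set (Set α)) (H : Set (Set α)) : Prop :=
  (∀ B ∈ H, B ∉ I) ∧ ∀ A : Set α, A ∉ I → ∃ B ∈ H, B ⊆ A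

/-- `H` is σ-closed: every countable ⊆-decreasing sequence from `H` has a lower bound in `H`. -/
def SigmaClosed {α : Type*} (H : Set (Set α)) : Prop :=
  ∀ f : ℕ → Set α, (∀ n, f n ∈ H) → (∀ n, f (n + 1) ⊆ f n) → ∃ B ∈ H, ∀ n, B ⊆ f n

/-- if `I` is countably complete and admits a σ-closed dense collection of
`I`-positive sets, then for every `I`-positive set `B'` there exist `i ∈ ω` and
`I`-positive `B₀, B₁ ⊆ B'` with `(B₀, B₁)` `i`-frequent. -/
theorem stmt11 {α : Type*} [LinearOrder α] [WellFoundedLT α]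
    (I : Set (Set α)) (hI : IsIdeal I) (hcc : CountablyComplete I)
    (H : Set (Set α)) (hHd : DensePos I H) (hHs : SigmaClosed H)
    (c : α → α → ℕ) (csym : ∀ a b, c a b = c b a) :
    ∀ B' : Set α, B' ∉ I →
      ∃ i : ℕ, ∃ B₀ B₁ : Set α, B₀ ⊆ B' ∧ B₁ ⊆ B' ∧ B₀ ∉ I ∧ B₁ ∉ I ∧
        Freq1 I c B₀ B₁ i := by
  intro B' hB'
  by_contra h
  push_neg at h
  have hpos : ∀ A ∈ H, A ∉ I := hHd.1
  have key : ∀ (i : ℕ) (A B : Set α), A ∈ H → B ∈ H → A ⊆ B' → B ⊆ B' →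
      ∃ A' B'' : Set α, A' ∈ H ∧ B'' ∈ H ∧ A' ⊆ A ∧ B'' ⊆ B ∧
        ∀ a ∈ A', {b ∈ B'' | c a b = i} ∈ I := by
    intro i A B hA hB hAB' hBB'
    have hnf := h i A B hAB' hBB' (hpos A hA) (hpos B hB)
    unfold Freq1 at hnf
    push_neg at hnf
    obtain ⟨A₀, hA₀A, hA₀pos, B₀, hB₀B, hB₀pos, hS⟩ := hnf
    set S := {a ∈ A₀ | {b ∈ B₀ | c a b = i} ∉ I} with hSdef
    have hA₁pos : A₀ \ S ∉ I := by
      intro hmem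
      apply hA₀pos
      have : A₀ ⊆ (A₀ \ S) ∪ S := by
        intro x hx
        by_cases hxS : x ∈ S
        · exact Or.inr hxS
        · exact Or.inl ⟨hx, hxS⟩
      exact hI.2.1 (hI.2.2 hmem hS) this
    obtain ⟨A', hA'H, hA'sub⟩ := hHd.2 _ hA₁pos
    obtain ⟨B'', hB''H, hB''sub⟩ := hHd.2 _ hB₀pos
    refine ⟨A', B'', hA'H, hB''H, (hA'sub.trans Set.diff_subset).trans hA₀A,
      hB''sub.trans hB₀B, ?_⟩
    intro a ha
    have haA : a ∈ A₀ \ S := hA'sub ha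
    have hsmall : {b ∈ B₀ | c a b = i} ∈ I := by
      by_contra hcon
      exact haA.2 ⟨haA.1, hcon⟩
    exact hI.2.1 hsmall (fun b hb => ⟨hB''sub hb.1, hb.2⟩)
  -- build the fusion sequence
  obtain ⟨A0, hA0H, hA0sub⟩ := hHd.2 B' hB'
  let T := {p : Set α × Set α // p.1 ∈ H ∧ p.2 ∈ H ∧ p.1 ⊆ B' ∧ p.2 ⊆ B'}
  have step : ∀ (i : ℕ) (p : T), ∃ q : T,
      q.1.1 ⊆ p.1.1 ∧ q.1.2 ⊆ p.1.2 ∧ ∀ a ∈ q.1.1, {b ∈ q.1.2 | c a b = i} ∈ I := by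
    intro i p
    obtain ⟨A', B'', hA'H, hB''H, hA'sub, hB''sub, hsm⟩ :=
      key i p.1.1 p.1.2 p.2.1 p.2.2.1 p.2.2.2.1 p.2.2.2.2
    exact ⟨⟨(A', B''), hA'H, hB''H, (hA'sub.trans p.2.2.2.1),
      (hB''sub.trans p.2.2.2.2)⟩, hA'sub, hB''sub, hsm⟩
  let p0 : T := ⟨(A0, A0), hA0H, hA0H, hA0sub, hA0sub⟩
  let g : ℕ → T := fun n => Nat.rec p0 (fun n p => Classical.choose (step n p)) n
  have hg : ∀ n, g (n + 1) = Classical.choose (step n (g n)) := fun n => rfl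
  have hspec : ∀ n, (g (n+1)).1.1 ⊆ (g n).1.1 ∧ (g (n+1)).1.2 ⊆ (g n).1.2 ∧
      ∀ a ∈ (g (n+1)).1.1, {b ∈ (g (n+1)).1.2 | c a b = n} ∈ I := by
    intro n
    rw [hg n]
    exact Classical.choose_spec (step n (g n))
  obtain ⟨Ainf, hAinfH, hAinfsub⟩ := hHs (fun n => (g n).1.1) (fun n => (g n).2.1)
    (fun n => (hspec n).1)
  obtain ⟨Binf, hBinfH, hBinfsub⟩ := hHs (fun n => (g n).1.2) (fun n => (g n).2.2.1)
    (fun n => (hspec n).2.1)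
  have hsmall : ∀ (i : ℕ) (a : α), a ∈ Ainf → {b ∈ Binf | c a b = i} ∈ I := by
    intro i a ha
    have h1 := (hspec i).2.2 a (hAinfsub (i+1) ha)
    exact hI.2.1 h1 (fun b hb => ⟨hBinfsub (i+1) hb.1, hb.2⟩)
  have hAinfne : Ainf.Nonempty := by
    rcases Set.eq_empty_or_nonempty Ainf with he | hne
    · exact absurd (he ▸ hI.1) (hpos Ainf hAinfH)
    · exact hne
  obtain ⟨a, ha⟩ := hAinfne
  have : Binf ∈ I := by
    have hU : Binf ⊆ ⋃ i, {b ∈ Binf | c a b = i} := by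
      intro b hb
      exact Set.mem_iUnion.2 ⟨c a b, hb, rfl⟩
    exact hI.2.1 (hcc _ (fun i => hsmall i a ha)) hU
  exact hpos Binf hBinfH this
end

section
/- For every infinite cardinal κ and every natural number n ≥ 1, κ →_hc (κ)²_n: for every coloring c : [κ]² → n there exist a color i < n and a set A ⊆ κ of size κ such that the graph (A, c⁻¹(i) ∩ [A]²) is highly connected. -/
open Cardinal Set


/-- If a finite union of sets is everything, some set is in the ultrafilter. -/
lemma exists_mem_ultra {α : Type*} {ι : Type*} [Finite ι] (U : Ultrafilter α)
    (s : ι → Set α) (h : ⋃ i, s i = Set.univ) : ∃ i, s i ∈ U := by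
  by_contra hc
  push_neg at hc
  have h1 : ∀ i, (s i)ᶜ ∈ U := fun i => Ultrafilter.compl_mem_iff_notMem.mpr (hc i)
  have h2 : (⋂ i, (s i)ᶜ) ∈ U := Filter.iInter_mem.mpr h1
  have h3 : (⋂ i, (s i)ᶜ) = ∅ := by
    rw [← Set.compl_iUnion, h, Set.compl_univ]
  rw [h3] at h2
  exact Filter.empty_notMem (U : Filter α) h2

/-- for every infinite cardinal `κ` and `n ≥ 1`, `κ →_hc (κ)²_n`:
every coloring `c : [κ]² → n` admits a color `i < n` and a set `A ⊆ κ` of size `κ` such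
that `(A, c⁻¹(i) ∩ [A]²)` is highly connected. -/
theorem stmt14 {α : Type*} [Infinite α] (n : ℕ) (hn : 1 ≤ n)
    (c : α → α → Fin n) (csym : ∀ a b, c a b = c b a) :
    ∃ i : Fin n, ∃ A : Set α, Cardinal.mk A = Cardinal.mk α ∧
      HighlyConnected (fun x y => x ≠ y ∧ c x y = i) A := by
  classical
  have hκ : (ℵ₀ : Cardinal) ≤ #α := Cardinal.infinite_iff.mp inferInstance
  -- the co-< κ filter
  set F : Filter α := Filter.comk (fun s => #s < #α)
    (by simpa using lt_of_lt_of_le Cardinal.aleph0_pos hκ)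
    (fun t ht s hst => lt_of_le_of_lt (Cardinal.mk_le_mk_of_subset hst) ht)
    (fun s hs t ht => lt_of_le_of_lt (Cardinal.mk_union_le s t)
      (Cardinal.add_lt_of_lt hκ hs ht)) with hF
  haveI hFne : F.NeBot := by
    refine Filter.neBot_iff.mpr (fun hbot => ?_)
    have : (∅ : Set α) ∈ F := by rw [hbot]; exact Filter.mem_bot
    rw [hF, Filter.mem_comk, Set.compl_empty, Cardinal.mk_univ] at this
    exact lt_irrefl _ this
  let U : Ultrafilter α := Ultrafilter.of F
  have hle : (U : Filter α) ≤ F := Ultrafilter.of_le F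
  -- uniformity
  have hU : ∀ s : Set α, s ∈ U → #s = #α := by
    intro s hs
    by_contra h
    have hlt : #s < #α := lt_of_le_of_ne (Cardinal.mk_set_le s) h
    have : sᶜ ∈ F := by rw [hF, Filter.mem_comk, compl_compl]; exact hlt
    exact (Ultrafilter.compl_mem_iff_notMem.mp (hle this)) hs
  -- each point has a U-large color class
  have hx : ∀ x : α, ∃ i : Fin n, {y | c x y = i} ∈ U := by
    intro x
    refine exists_mem_ultra U _ ?_
    ext y
    simp only [Set.mem_iUnion, Set.mem_setOf_eq, Set.mem_univ, iff_true]
    exact ⟨c x y, rfl⟩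
  -- some color class of points is in U
  obtain ⟨i, hAU⟩ : ∃ i : Fin n, {x | {y | c x y = i} ∈ U} ∈ U := by
    refine exists_mem_ultra U _ ?_
    ext x
    simp only [Set.mem_iUnion, Set.mem_setOf_eq, Set.mem_univ, iff_true]
    exact hx x
  set A : Set α := {x | {y | c x y = i} ∈ U} with hA
  refine ⟨i, A, hU A hAU, ?_⟩
  intro Y hY a ha b hb
  rw [hU A hAU] at hY
  -- the common neighborhood
  have hS : ({y | c a y = i} ∩ {y | c b y = i} ∩ A) ∈ U :=
    Filter.inter_mem (Filter.inter_mem ha.1 hb.1) hAU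
  have hsmall : #(↥(Y ∪ {a, b})) < #α := by
    refine lt_of_le_of_lt (Cardinal.mk_union_le Y {a, b}) ?_
    refine Cardinal.add_lt_of_lt hκ hY ?_
    exact lt_of_lt_of_le (((Set.finite_singleton b).insert a).lt_aleph0) hκ
  have hns : ¬ ({y | c a y = i} ∩ {y | c b y = i} ∩ A) ⊆ Y ∪ {a, b} := by
    intro hsub
    have := lt_of_le_of_lt (Cardinal.mk_le_mk_of_subset hsub) hsmall
    rw [hU _ hS] at this
    exact lt_irrefl _ this
  obtain ⟨z, hzS, hzout⟩ := Set.not_subset.mp hns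
  have hzY : z ∉ Y := fun h => hzout (Or.inl h)
  have hza : z ≠ a := fun h => hzout (Or.inr (by simp [h]))
  have hzb : z ≠ b := fun h => hzout (Or.inr (by simp [h]))
  have hzAY : z ∈ A \ Y := ⟨hzS.2, hzY⟩
  have hcaz : c a z = i := hzS.1.1
  have hcbz : c b z = i := hzS.1.2
  refine Relation.ReflTransGen.head ⟨ha, hzAY, hza.symm, hcaz⟩ ?_
  exact Relation.ReflTransGen.single ⟨hzAY, hb, hzb, (csym z b).trans hcbz⟩
end

section
/- If κ and θ are infinite cardinals with κ ≤ 2^θ, then κ ↛_hc (κ)²_θ: there exists a coloring c : [κ]² → θ such that no set A ⊆ κ of size κ is highly connected in a single color, i.e., for every A of size κ and every ξ < θ, the graph (A, c⁻¹(ξ) ∩ [A]²) fails to be highly connected. -/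
/-!
Fix an injection `a ↦ f a` of `κ` into `𝒫(θ)` and a well-order of `κ` of order type `κ`.
Colour a pair `a < b` by `(ζ, [ζ ∈ f a])`, where `ζ` is some point of `f a ∆ f b` (the colours
`θ × 2` are then recoded into `θ`). Every edge of colour `(ζ, ε)` joins a lower vertex on side
`ε` of `ζ` to an upper vertex on the other side. So in a set `A` of size `κ`, either some vertex
of `A` lies on the upper side, and all its neighbours lie in its initial segment, which has size
`< κ`; or no vertex does, and the colour class is empty on `A`. Either way removing the
neighbourhood of one vertex disconnects `A`.
-/

open Cardinal

theorem not_highlyConnected_of_mk_neighbors_lt {α : Type*} {E : α → α → Prop} {X : Set α}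
    (hX : ℵ₀ ≤ #X) {b : α} (hb : b ∈ X) (hbb : ¬ E b b) (hN : #{v | v ∈ X ∧ E b v} < #X) :
    ¬ HighlyConnected E X := by
  set Y := {v | v ∈ X ∧ E b v}
  intro hX_conn
  have hbY : b ∈ X \ Y := ⟨hb, fun h => hbb h.2⟩
  obtain ⟨a, ha, hab⟩ : ∃ a ∈ X \ Y, a ≠ b := by
    by_contra! hsub
    have hle : #(X \ Y : Set α) ≤ 1 :=
      (mk_le_mk_of_subset fun a ha => hsub a ha).trans (mk_singleton b).le
    have := (le_mk_sdiff_add_mk X Y).trans (add_le_add_left hle _)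
    exact this.not_gt (add_lt_of_lt hX (one_lt_aleph0.trans_le hX) hN)
  rcases (hX_conn Y hN b hbY a ha).cases_head with rfl | ⟨v, ⟨-, hv, hbv⟩, -⟩
  · exact hab rfl
  · exact hv.2 ⟨hv.1, hbv⟩

section DiffColoring

open Classical

variable {α β : Type*} [Nonempty β]

noncomputable def symmDiffPoint (f : α → Set β) (a b : α) : β :=
  Classical.epsilon (· ∈ symmDiff (f a) (f b))

theorem symmDiffPoint_comm (f : α → Set β) (a b : α) :
    symmDiffPoint f a b = symmDiffPoint f b a := by
  rw [symmDiffPoint, symmDiffPoint, symmDiff_comm]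

theorem symmDiffPoint_mem {f : α → Set β} (hf : Function.Injective f) {a b : α} (hab : a ≠ b) :
    symmDiffPoint f a b ∈ symmDiff (f a) (f b) :=
  Classical.epsilon_spec (Set.nonempty_iff_ne_empty.mpr fun h =>
    hab (hf (symmDiff_eq_bot.mp h)))

noncomputable def diffColoring (r : α → α → Prop) (f : α → Set β) (a b : α) : β × Bool :=
  (symmDiffPoint f a b, decide (symmDiffPoint f a b ∈ f (if r a b then a else b)))

variable {r : α → α → Prop} {f : α → Set β}

theorem diffColoring_sides (hf : Function.Injective f) {a b : α} (hab : a ≠ b) (hr : r a b)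
    {ζ : β} {ε : Bool} (h : diffColoring r f a b = (ζ, ε)) :
    decide (ζ ∈ f a) = ε ∧ decide (ζ ∈ f b) = !ε := by
  simp only [diffColoring, if_pos hr, Prod.mk.injEq] at h
  obtain ⟨rfl, rfl⟩ := h
  rcases Set.mem_symmDiff.mp (symmDiffPoint_mem hf hab) with ⟨h₁, h₂⟩ | ⟨h₁, h₂⟩ <;>
    simp [h₁, h₂]

variable [IsStrictTotalOrder α r]

theorem diffColoring_comm (a b : α) : diffColoring r f a b = diffColoring r f b a := by
  rcases trichotomous_of r a b with hab | rfl | hba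
  · simp [diffColoring, hab, asymm hab, symmDiffPoint_comm f a b]
  · rfl
  · simp [diffColoring, hba, asymm hba, symmDiffPoint_comm f a b]

theorem exists_mk_neighbors_lt (hf : Function.Injective f)
    (hr : ∀ b, #{x // r x b} < #α) {A : Set α} (hA : A.Nonempty) (p : β × Bool) :
    ∃ b ∈ A, #{v | v ∈ A ∧ b ≠ v ∧ diffColoring r f b v = p} < #α := by
  obtain ⟨ζ, ε⟩ := p
  by_cases hupper : ∃ b ∈ A, decide (ζ ∈ f b) = !ε
  · obtain ⟨b, hbA, hb⟩ := hupper
    refine ⟨b, hbA, lt_of_le_of_lt ?_ (hr b)⟩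
    refine mk_le_of_injective (f := fun v => ⟨v.1, ?_⟩) fun v w h => Subtype.ext (congrArg (·.1) h)
    obtain ⟨-, hbv, hcol⟩ := v.2
    refine (trichotomous_of r b v).resolve_left (fun hlt => ?_) |>.resolve_left hbv
    have := (diffColoring_sides hf hbv hlt hcol).1
    cases ε <;> simp_all
  · push Not at hupper
    obtain ⟨b, hbA⟩ := hA
    refine ⟨b, hbA, lt_of_eq_of_lt (mk_set_eq_zero_iff.mpr ?_)
      (pos_iff_ne_zero.mpr (mk_ne_zero_iff.mpr ⟨b⟩))⟩
    refine Set.eq_empty_of_forall_notMem fun v ⟨hvA, hbv, hcol⟩ => ?_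
    rcases trichotomous_of r b v with hlt | rfl | hlt
    · exact hupper v hvA (diffColoring_sides hf hbv hlt hcol).2
    · exact hbv rfl
    · rw [diffColoring_comm] at hcol
      exact hupper b hbA (diffColoring_sides hf hbv.symm hlt hcol).2

end DiffColoring

/-- if `κ ≤ 2^θ` (with `κ, θ` infinite), then `κ ↛_hc (κ)²_θ`: there is a
coloring `c : [κ]² → θ` such that no `A ⊆ κ` of size `κ` is highly connected in a single
color. -/
theorem stmt15 {α β : Type u} [Infinite α] [Infinite β]
    (h : Cardinal.mk α ≤ 2 ^ Cardinal.mk β) :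
    ∃ c : α → α → β, (∀ a b, c a b = c b a) ∧
      ∀ A : Set α, Cardinal.mk A = Cardinal.mk α →
        ∀ ξ : β, ¬ HighlyConnected (fun x y => x ≠ y ∧ c x y = ξ) A := by
  obtain ⟨f⟩ : Nonempty (α ↪ Set β) := by rwa [← le_def, mk_set]
  obtain ⟨r, _, hr⟩ := exists_ord_eq α
  obtain ⟨e⟩ : Nonempty (β × Bool ≃ β) := by
    rw [← Cardinal.eq]
    simpa using Cardinal.mul_eq_left (aleph0_le_mk β)
      (natCast_lt_aleph0.le.trans (aleph0_le_mk β)) two_ne_zero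
  refine ⟨fun a b => e (diffColoring r f a b), fun a b => congrArg e (diffColoring_comm a b), ?_⟩
  intro A hA ξ
  have hAinf : ℵ₀ ≤ #A := hA ▸ aleph0_le_mk α
  obtain ⟨b, hb, hsmall⟩ := exists_mk_neighbors_lt f.injective (fun b => card_typein_lt b hr)
    (Set.infinite_coe_iff.mp (infinite_iff.mpr hAinf)).nonempty (e.symm ξ)
  refine not_highlyConnected_of_mk_neighbors_lt hAinf hb (fun h => h.1 rfl) ?_
  simpa only [hA, Equiv.eq_symm_apply] using hsmall
end
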